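/- arXiv:math/0210396 — 5 statements merged into one kernel-verified Lean document; each statement's English description precedes it below -/
import Mathlib

section
/- The coefficients of the even Hermite polynomials relate rising and falling factorials: for every natural number m and every real θ, ∑_{k=0}^{m} h_{2m,k} 2^{-k} [θ+1/2]_{m-k} = (θ)_m, where h_{n,k} = (-1)^k C(n,2k) (2k)!/(2^k k!), [x]_n = x(x+1)⋯(x+n-1) is the rising factorial, and (x)_n = x(x-1)⋯(x-n+1) is the falling factorial. -/
open Finset

/-- Hermite polynomial coefficient `h_{n,k} = (-1)^k C(n,2k) (2k)!/(2^k k!)`. -/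
noncomputable def hermiteCoeff (n k : ℕ) : ℝ :=
  (-1) ^ k * (n.choose (2 * k)) * (Nat.factorial (2 * k)) / (2 ^ k * Nat.factorial k)

/-- Rising factorial `[x]_n = x(x+1)⋯(x+n-1)`. -/
noncomputable def risingFac (x : ℝ) (n : ℕ) : ℝ := ∏ j ∈ Finset.range n, (x + j)

/-- Falling factorial `(x)_n = x(x-1)⋯(x-n+1)`. -/
noncomputable def fallingFac (x : ℝ) (n : ℕ) : ℝ := ∏ j ∈ Finset.range n, (x - j)

lemma hermiteCoeff_eq (n k : ℕ) :
    hermiteCoeff n k = (-1) ^ k * (n.descFactorial (2 * k) : ℝ) / (2 ^ k * Nat.factorial k) := by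
  rw [hermiteCoeff]
  rw [show n.descFactorial (2 * k) = Nat.factorial (2 * k) * n.choose (2 * k) from
    Nat.descFactorial_eq_factorial_mul_choose n (2 * k)]
  push_cast
  ring

lemma hermiteCoeff_key (m k : ℕ) (hk : k ≤ m) :
    hermiteCoeff (2 * (m + 1)) (k + 1) * 2⁻¹ ^ (k + 1)
    = hermiteCoeff (2 * m) (k + 1) * 2⁻¹ ^ (k + 1)
      - ((2 * m : ℝ) - k + 1 / 2) * (hermiteCoeff (2 * m) k * 2⁻¹ ^ k) := by
  have h1 : (2 * (m + 1)).descFactorial (2 * (k + 1))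
      = (2 * m + 2) * ((2 * m + 1) * (2 * m).descFactorial (2 * k)) := by
    rw [show 2 * (m + 1) = (2 * m + 1) + 1 by ring, show 2 * (k + 1) = (2 * k + 1) + 1 by ring,
      Nat.succ_descFactorial_succ, Nat.succ_descFactorial_succ]
  have h2 : (2 * m).descFactorial (2 * (k + 1))
      = (2 * m - (2 * k + 1)) * ((2 * m - 2 * k) * (2 * m).descFactorial (2 * k)) := by
    rw [show 2 * (k + 1) = (2 * k + 1) + 1 by ring, Nat.descFactorial_succ,
      Nat.descFactorial_succ]
  rcases lt_or_eq_of_le hk with hlt | rfl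
  · have c1 : ((2 * m - (2 * k + 1) : ℕ) : ℝ) = 2 * m - (2 * k + 1) := by
      rw [Nat.cast_sub (by omega)]; push_cast; ring
    have c2 : ((2 * m - 2 * k : ℕ) : ℝ) = 2 * m - 2 * k := by
      rw [Nat.cast_sub (by omega)]; push_cast; ring
    rw [hermiteCoeff_eq, hermiteCoeff_eq, hermiteCoeff_eq, h1, h2]
    push_cast [c1, c2]
    have hf : (Nat.factorial (k + 1) : ℝ) = (k + 1) * Nat.factorial k := by
      rw [Nat.factorial_succ]; push_cast; ring
    rw [hf]
    have hk0 : (Nat.factorial k : ℝ) ≠ 0 := by positivity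
    field_simp
    ring
  · have h2' : (2 * k).descFactorial (2 * (k + 1)) = 0 :=
      Nat.descFactorial_eq_zero_iff_lt.2 (by omega)
    rw [hermiteCoeff_eq, hermiteCoeff_eq, hermiteCoeff_eq, h1, h2']
    have hd : ((2 * k).descFactorial (2 * k) : ℝ) ≠ 0 := by
      rw [Nat.descFactorial_self]; positivity
    have hf : (Nat.factorial (k + 1) : ℝ) = (k + 1) * Nat.factorial k := by
      rw [Nat.factorial_succ]; push_cast; ring
    push_cast [hf]
    have hk0 : (Nat.factorial k : ℝ) ≠ 0 := by positivity
    field_simp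
    ring

lemma hermiteCoeff_top (m : ℕ) : hermiteCoeff (2 * m) (m + 1) = 0 := by
  rw [hermiteCoeff_eq, Nat.descFactorial_eq_zero_iff_lt.2 (by omega)]
  simp

theorem even_hermite_coeff_rising_falling (m : ℕ) (θ : ℝ) :
    ∑ k ∈ Finset.range (m + 1),
      hermiteCoeff (2 * m) k * 2⁻¹ ^ k * risingFac (θ + 1 / 2) (m - k)
    = fallingFac θ m := by
  induction m with
  | zero => simp [hermiteCoeff, risingFac, fallingFac]
  | succ m ih =>
    have hfall : fallingFac θ (m + 1) = fallingFac θ m * (θ - m) :=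
      Finset.prod_range_succ _ m
    rw [hfall, ← ih, Finset.sum_range_succ']
    have hzero : hermiteCoeff (2 * (m + 1)) 0 * 2⁻¹ ^ 0 = 1 := by
      simp [hermiteCoeff]
    have step1 : ∀ k ∈ Finset.range (m + 1),
        hermiteCoeff (2 * (m + 1)) (k + 1) * 2⁻¹ ^ (k + 1)
          * risingFac (θ + 1 / 2) (m + 1 - (k + 1))
        = hermiteCoeff (2 * m) (k + 1) * 2⁻¹ ^ (k + 1) * risingFac (θ + 1 / 2) (m - k)
          - ((2 * m : ℝ) - k + 1 / 2)
            * (hermiteCoeff (2 * m) k * 2⁻¹ ^ k * risingFac (θ + 1 / 2) (m - k)) := by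
      intro k hk
      rw [Nat.succ_sub_succ, hermiteCoeff_key m k (Nat.lt_succ_iff.mp (Finset.mem_range.mp hk))]
      ring
    rw [Finset.sum_congr rfl step1, Finset.sum_sub_distrib]
    -- combine the first sum with the `k = 0` term
    have hshift : (∑ k ∈ Finset.range (m + 1),
          hermiteCoeff (2 * m) (k + 1) * 2⁻¹ ^ (k + 1) * risingFac (θ + 1 / 2) (m - k))
        + hermiteCoeff (2 * (m + 1)) 0 * 2⁻¹ ^ 0 * risingFac (θ + 1 / 2) (m + 1 - 0)
        = ∑ k ∈ Finset.range (m + 1),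
            hermiteCoeff (2 * m) k * 2⁻¹ ^ k * risingFac (θ + 1 / 2) (m + 1 - k) := by
      have h0 : hermiteCoeff (2 * m) 0 * 2⁻¹ ^ 0 = 1 := by simp [hermiteCoeff]
      have := Finset.sum_range_succ'
        (fun k => hermiteCoeff (2 * m) k * 2⁻¹ ^ k * risingFac (θ + 1 / 2) (m + 1 - k)) (m + 1)
      simp only [Nat.succ_sub_succ] at this
      rw [Finset.sum_range_succ] at this
      simp only [hermiteCoeff_top, Nat.sub_self, zero_mul, add_zero] at this
      have e : hermiteCoeff (2 * (m + 1)) 0 * 2⁻¹ ^ 0 * risingFac (θ + 1 / 2) (m + 1 - 0)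
          = hermiteCoeff (2 * m) 0 * 2⁻¹ ^ 0 * risingFac (θ + 1 / 2) (m + 1 - 0) := by
        rw [hzero, h0]
      rw [e]
      linarith [this]
    rw [sub_add_eq_add_sub, hshift, Finset.sum_mul, ← Finset.sum_sub_distrib]
    refine Finset.sum_congr rfl fun k hk => ?_
    have hkm : k ≤ m := by simp at hk; omega
    have hsucc : m + 1 - k = (m - k) + 1 := by omega
    rw [hsucc, show risingFac (θ + 1 / 2) ((m - k) + 1)
      = risingFac (θ + 1 / 2) (m - k) * ((θ + 1 / 2) + (m - k : ℕ)) from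
      Finset.prod_range_succ _ _]
    have hc : ((m - k : ℕ) : ℝ) = m - k := by rw [Nat.cast_sub hkm]
    rw [hc]
    ring
end

section
/- For q > 0 and every real λ ≥ 0, E[(B²/(λ² + B²))^q] = E[exp(-λ √(2 Γ_q))], where B is standard Gaussian and Γ_q is an independent Gamma(q) random variable. -/
/-!
For `x ≠ 0` the Laplace transform of the gamma law gives
`(x² / (λ² + x²)) ^ q = E[exp (-(λ² / x²) Γ_q)]`, so by Fubini the left side is
`E[φ (λ² Γ_q)]` with `φ c = E[exp (-c / B²)]`. Completing the square,
`x² / 2 + c / x² = (x - b / x)² / 2 + b` with `b = √(2c)`, and the Cauchy–Schlömilch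
substitution `u = x - b / x`, which preserves Lebesgue measure on `ℝ`, gives
`φ c = exp (-√(2c))`.
-/

open MeasureTheory ProbabilityTheory Real Set

lemma ae_nonneg_gammaMeasure (a r : ℝ) : ∀ᵐ t ∂gammaMeasure a r, 0 ≤ t := by
  simp only [ae_iff, not_le]
  exact (withDensity_apply _ measurableSet_Iio).trans (lintegral_gammaPDF_of_nonpos le_rfl)

lemma integral_gammaMeasure_eq_integral_Ioi {a r : ℝ} (ha : 0 < a) (hr : 0 < r)
    (f : ℝ → ℝ) :
    ∫ t, f t ∂gammaMeasure a r
      = ∫ t in Ioi 0, r ^ a / Gamma a * t ^ (a - 1) * exp (-(r * t)) * f t := by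
  rw [gammaMeasure, integral_withDensity_eq_integral_toReal_smul (f := gammaPDF a r)
    (measurable_gammaPDFReal a r).ennreal_ofReal (ae_of_all _ fun _ => ENNReal.ofReal_lt_top),
    ← integral_Ici_eq_integral_Ioi, ← setIntegral_eq_integral_of_forall_compl_eq_zero]
  · refine setIntegral_congr_fun measurableSet_Ici fun t (ht : 0 ≤ t) => ?_
    rw [gammaPDF, ENNReal.toReal_ofReal (gammaPDFReal_nonneg ha hr t), gammaPDFReal, if_pos ht,
      smul_eq_mul]
  · intro t (ht : ¬ 0 ≤ t)
    simp [gammaPDF, gammaPDFReal, ht]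

lemma integral_exp_neg_mul_gammaMeasure {a r s : ℝ} (ha : 0 < a) (hr : 0 < r) (hs : -r < s) :
    ∫ t, exp (-(s * t)) ∂gammaMeasure a r = (r / (r + s)) ^ a := by
  have hrs : 0 < r + s := by linarith
  have hdensity : ∀ t : ℝ, r ^ a / Gamma a * t ^ (a - 1) * exp (-(r * t)) * exp (-(s * t))
      = r ^ a / Gamma a * (t ^ (a - 1) * exp (-((r + s) * t))) := fun t => by
    rw [mul_assoc, mul_assoc, ← exp_add]; ring_nf
  simp_rw [integral_gammaMeasure_eq_integral_Ioi ha hr, hdensity, integral_const_mul,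
    integral_rpow_mul_exp_neg_mul_Ioi ha hrs, div_rpow hr.le hrs.le, one_div,
    inv_rpow hrs.le]
  field_simp [(Gamma_pos_of_pos ha).ne']

section CauchySchlomilch

variable {b : ℝ}

lemma hasDerivAt_id_sub_const_div (b : ℝ) {x : ℝ} (hx : x ≠ 0) :
    HasDerivAt (fun x => x - b / x) (1 + b / x ^ 2) x := by
  simpa only [div_eq_mul_inv, mul_neg, sub_neg_eq_add] using
    (hasDerivAt_id' x).fun_sub ((hasDerivAt_inv hx).const_mul b)

lemma strictMonoOn_id_sub_const_div (hb : 0 ≤ b) : StrictMonoOn (fun x => x - b / x) (Ioi 0) :=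
  fun x (hx : 0 < x) y _ hxy => by
    have := div_le_div_of_nonneg_left hb hx hxy.le
    simp only
    linarith

lemma image_id_sub_const_div_Ioi (hb : 0 < b) : (fun x => x - b / x) '' Ioi 0 = univ := by
  refine eq_univ_of_forall fun y => ?_
  -- the positive root of `x ^ 2 - y * x - b`
  set s := √(y ^ 2 + 4 * b)
  have hs : s ^ 2 = y ^ 2 + 4 * b := sq_sqrt (by positivity)
  have hys : |y| < s := by
    rw [← sqrt_sq_eq_abs]
    exact sqrt_lt_sqrt (sq_nonneg y) (by linarith)
  have hys_pos : 0 < y + s := by linarith [neg_abs_le y]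
  refine ⟨(y + s) / 2, half_pos hys_pos, ?_⟩
  field_simp
  linear_combination hs

lemma image_neg_const_div_Ioi (hb : 0 < b) : (fun x => -b / x) '' Ioi 0 = Iio 0 := by
  ext y
  constructor
  · rintro ⟨x, hx, rfl⟩
    exact div_neg_of_neg_of_pos (neg_neg_of_pos hb) hx
  · intro (hy : y < 0)
    exact ⟨-b / y, div_pos_of_neg_of_neg (neg_neg_of_pos hb) hy, by field_simp⟩

lemma hasDerivWithinAt_neg_const_div (b : ℝ) {x : ℝ} (hx : x ≠ 0) (s : Set ℝ) :
    HasDerivWithinAt (fun x => -b / x) (b / x ^ 2) s x := by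
  simpa only [div_eq_mul_inv, mul_neg, neg_mul, neg_neg] using
    ((hasDerivAt_inv hx).const_mul (-b)).hasDerivWithinAt

lemma injOn_neg_const_div (hb : 0 < b) : InjOn (fun x => -b / x) (Ioi 0) :=
  fun x (hx : 0 < x) y (hy : 0 < y) hxy => by
    rw [div_eq_div_iff hx.ne' hy.ne'] at hxy
    exact mul_left_cancel₀ (neg_ne_zero.2 hb.ne') (by linarith)

lemma integral_Ioi_mul_comp_id_sub_const_div (hb : 0 < b) (g : ℝ → ℝ) :
    ∫ x in Ioi 0, (1 + b / x ^ 2) * g (x - b / x) = ∫ y, g y := by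
  have := integral_image_eq_integral_abs_deriv_smul measurableSet_Ioi
    (fun x (hx : 0 < x) => (hasDerivAt_id_sub_const_div b hx.ne').hasDerivWithinAt)
    (strictMonoOn_id_sub_const_div hb.le).injOn g
  rw [image_id_sub_const_div_Ioi hb, Measure.restrict_univ] at this
  rw [this]
  refine setIntegral_congr_fun measurableSet_Ioi fun x (hx : 0 < x) => ?_
  rw [smul_eq_mul, abs_of_pos (by positivity)]

lemma integrableOn_Ioi_mul_comp_id_sub_const_div {g : ℝ → ℝ} (hb : 0 < b)
    (hg : Integrable g) :
    IntegrableOn (fun x => (1 + b / x ^ 2) * g (x - b / x)) (Ioi 0) := by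
  have := (integrableOn_image_iff_integrableOn_abs_deriv_smul measurableSet_Ioi
    (fun x (hx : 0 < x) => (hasDerivAt_id_sub_const_div b hx.ne').hasDerivWithinAt)
    (strictMonoOn_id_sub_const_div hb.le).injOn g).1
    (by rw [image_id_sub_const_div_Ioi hb]; exact hg.integrableOn)
  refine this.congr_fun (fun x (hx : 0 < x) => ?_) measurableSet_Ioi
  dsimp only
  rw [smul_eq_mul, abs_of_pos (by positivity)]

-- `x ↦ -b / x` maps `Ioi 0` onto `Iio 0` and leaves `x - b / x` unchanged.
lemma integral_Iio_comp_id_sub_const_div (hb : 0 < b) (g : ℝ → ℝ) :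
    ∫ x in Iio 0, g (x - b / x) = ∫ x in Ioi 0, b / x ^ 2 * g (x - b / x) := by
  rw [← image_neg_const_div_Ioi hb, integral_image_eq_integral_abs_deriv_smul measurableSet_Ioi
    (fun x (hx : 0 < x) => hasDerivWithinAt_neg_const_div b hx.ne' _) (injOn_neg_const_div hb)]
  refine setIntegral_congr_fun measurableSet_Ioi fun x (hx : 0 < x) => ?_
  rw [smul_eq_mul, abs_of_pos (by positivity)]
  congr 2
  field_simp
  ring

lemma integrableOn_Iio_comp_id_sub_const_div_iff {g : ℝ → ℝ} (hb : 0 < b) :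
    IntegrableOn (fun x => g (x - b / x)) (Iio 0)
      ↔ IntegrableOn (fun x => b / x ^ 2 * g (x - b / x)) (Ioi 0) := by
  rw [← image_neg_const_div_Ioi hb,
    integrableOn_image_iff_integrableOn_abs_deriv_smul measurableSet_Ioi
      (fun x (hx : 0 < x) => hasDerivWithinAt_neg_const_div b hx.ne' _) (injOn_neg_const_div hb)]
  refine integrableOn_congr_fun (fun x (hx : 0 < x) => ?_) measurableSet_Ioi
  rw [smul_eq_mul, abs_of_pos (by positivity)]
  congr 2
  field_simp
  ring

theorem integral_comp_id_sub_const_div {g : ℝ → ℝ} (hb : 0 < b) (hg : Integrable g) :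
    ∫ x, g (x - b / x) = ∫ x, g x := by
  have hmul := integrableOn_Ioi_mul_comp_id_sub_const_div hb hg
  have hweight : IntegrableOn (fun x => b / x ^ 2 * g (x - b / x)) (Ioi 0) := by
    refine IntegrableOn.congr_fun (hmul.bdd_mul (c := 1) (f := fun x => b / (x ^ 2 + b))
      (continuous_const.div (by fun_prop) fun x => by positivity).aestronglyMeasurable
      (ae_of_all _ fun x => ?_)) (fun x (hx : 0 < x) => ?_) measurableSet_Ioi
    · rw [norm_div, Real.norm_of_nonneg (by positivity), Real.norm_of_nonneg (by positivity)]
      exact div_le_one_of_le₀ (by nlinarith) (by positivity)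
    · field_simp
  have hplain : IntegrableOn (fun x => g (x - b / x)) (Ioi 0) :=
    (hmul.sub hweight).congr_fun (fun x _ => by simp only [Pi.sub_apply]; ring) measurableSet_Ioi
  have hneg := (integrableOn_Iio_comp_id_sub_const_div_iff hb).2 hweight
  rw [← intervalIntegral.integral_Iic_add_Ioi
      ((integrableOn_Iic_iff_integrableOn_Iio enorm_ne_top).2 hneg) hplain,
    integral_Iic_eq_integral_Iio, integral_Iio_comp_id_sub_const_div hb,
    ← integral_add hweight hplain, ← integral_Ioi_mul_comp_id_sub_const_div hb]
  exact setIntegral_congr_fun measurableSet_Ioi fun x _ => by ring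

end CauchySchlomilch

lemma integral_gaussianReal_exp_neg_div_sq {c : ℝ} (hc : 0 ≤ c) :
    ∫ x, exp (-(c / x ^ 2)) ∂gaussianReal 0 1 = exp (-√(2 * c)) := by
  rcases hc.eq_or_lt with rfl | hc
  · simp
  set b := √(2 * c)
  have hb : 0 < b := sqrt_pos.2 (by positivity)
  have hb2 : b ^ 2 = 2 * c := sq_sqrt (by positivity)
  -- `x ^ 2 / 2 + c / x ^ 2 = (x - b / x) ^ 2 / 2 + b`
  have hsquare : ∀ x ≠ (0 : ℝ), gaussianPDFReal 0 1 x • exp (-(c / x ^ 2))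
      = (√(2 * π))⁻¹ * exp (-b) * exp (-2⁻¹ * (x - b / x) ^ 2) := fun x hx => by
    rw [gaussianPDFReal, smul_eq_mul, mul_assoc, ← exp_add, mul_assoc (√(2 * π))⁻¹,
      ← exp_add]
    simp only [NNReal.coe_one, mul_one, sub_zero]
    congr 2
    field_simp
    linear_combination hb2
  rw [integral_gaussianReal_eq_integral_smul one_ne_zero,
    integral_congr_ae ((Measure.ae_ne volume 0).mono hsquare), integral_const_mul,
    integral_comp_id_sub_const_div hb (integrable_exp_neg_mul_sq (by norm_num)), integral_gaussian]
  field_simp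

lemma rpow_sq_div_add_sq_eq_integral_gammaMeasure {q : ℝ} (hq : 0 < q) (l : ℝ) {x : ℝ}
    (hx : x ≠ 0) :
    (x ^ 2 / (l ^ 2 + x ^ 2)) ^ q = ∫ t, exp (-(l ^ 2 * t / x ^ 2)) ∂gammaMeasure q 1 := by
  simp_rw [mul_div_right_comm, integral_exp_neg_mul_gammaMeasure hq one_pos
    (neg_one_lt_zero.trans_le (by positivity : 0 ≤ l ^ 2 / x ^ 2))]
  congr 1
  field_simp
  ring

theorem gaussian_gamma_laplace_identity (q : ℝ) (hq : 0 < q) (l : ℝ) (hl : 0 ≤ l) :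
    (∫ x : ℝ, (x ^ 2 / (l ^ 2 + x ^ 2)) ^ q ∂(gaussianReal 0 1))
      = ∫ t : ℝ, Real.exp (-l * Real.sqrt (2 * t)) ∂(gammaMeasure q 1) := by
  have : IsProbabilityMeasure (gammaMeasure q 1) := isProbabilityMeasure_gammaMeasure hq one_pos
  have hB : ∀ᵐ x ∂gaussianReal 0 1, x ≠ 0 :=
    (gaussianReal_absolutelyContinuous 0 one_ne_zero).ae_le (Measure.ae_ne volume 0)
  have hΓ := ae_nonneg_gammaMeasure q 1
  have hkernel : Integrable (Function.uncurry fun x t : ℝ => exp (-(l ^ 2 * t / x ^ 2)))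
      ((gaussianReal 0 1).prod (gammaMeasure q 1)) := by
    refine (integrable_const 1).mono' (Measurable.aestronglyMeasurable (by fun_prop)) ?_
    filter_upwards [Measure.quasiMeasurePreserving_snd.ae hΓ] with p hp
    rw [Function.uncurry_apply_pair, norm_of_nonneg (exp_nonneg _), exp_le_one_iff, neg_nonpos]
    positivity
  calc ∫ x, (x ^ 2 / (l ^ 2 + x ^ 2)) ^ q ∂gaussianReal 0 1
      = ∫ x, ∫ t, exp (-(l ^ 2 * t / x ^ 2)) ∂gammaMeasure q 1 ∂gaussianReal 0 1 :=
        integral_congr_ae <|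
          hB.mono fun _ hx => rpow_sq_div_add_sq_eq_integral_gammaMeasure hq l hx
    _ = ∫ t, ∫ x, exp (-(l ^ 2 * t / x ^ 2)) ∂gaussianReal 0 1 ∂gammaMeasure q 1 :=
        integral_integral_swap hkernel
    _ = ∫ t, exp (-l * √(2 * t)) ∂gammaMeasure q 1 := by
        refine integral_congr_ae (hΓ.mono fun t ht => ?_)
        dsimp only
        rw [integral_gaussianReal_exp_neg_div_sq (by positivity), mul_left_comm,
          sqrt_mul (sq_nonneg l), sqrt_sq hl, neg_mul]
end

section
/- Define the Hermite function for q with 2q not a non-positive integer by h_{-2q}(λ) = (1/(2Γ(2q))) ∑_{j=0}^∞ Γ(q + j/2) 2^{q+j/2} (-λ)^j / j!. Then for q > 0 and λ ≥ 0, h_{-2q}(λ) = (1/Γ(2q)) ∫_0^∞ t^{2q-1} e^{-t²/2 - λt} dt. -/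
open Real MeasureTheory Set

/-! Expand `exp (-l * t)` in its Taylor series and integrate termwise: the series of absolute
values sums to `t ^ (2q-1) * exp (-t ^ 2 / 2) * exp |l * t|`, which is integrable on `(0, ∞)`,
so dominated convergence applies; the `j`-th term is a Gaussian moment, which the substitution
`u = t ^ 2 / 2` turns into `Γ (q + j / 2) 2 ^ (q + j / 2 - 1)`. -/

theorem hasSum_integral_mul_pow_div_factorial {α : Type*} [MeasurableSpace α] {μ : Measure α}
    {g u : α → ℝ} (hg : AEStronglyMeasurable g μ) (hu : AEStronglyMeasurable u μ)
    (hint : Integrable (fun a => g a * exp |u a|) μ) :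
    HasSum (fun n : ℕ => ∫ a, g a * (u a ^ n / n.factorial) ∂μ)
      (∫ a, g a * exp (u a) ∂μ) := by
  have hexp (x : ℝ) : HasSum (fun n : ℕ => x ^ n / n.factorial) (exp x) := by
    rw [exp_eq_exp_ℝ]; exact NormedSpace.expSeries_div_hasSum_exp x
  refine hasSum_integral_of_dominated_convergence
    (fun n a => |g a| * (|u a| ^ n / n.factorial)) (fun n => by fun_prop)
    (fun n => ae_of_all _ fun a => ?_)
    (ae_of_all _ fun a => (summable_pow_div_factorial _).mul_left _) ?_
    (ae_of_all _ fun a => (hexp (u a)).mul_left (g a))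
  · simp
  · simp_rw [tsum_mul_left, (hexp _).tsum_eq]
    simpa [abs_mul] using hint.norm

theorem integral_Ioi_rpow_mul_exp_neg_sq_div_two {s : ℝ} (hs : 0 < s) :
    ∫ t in Ioi (0 : ℝ), t ^ (s - 1) * exp (-t ^ 2 / 2) = 2 ^ (s / 2 - 1) * Gamma (s / 2) := by
  have hsq (t : ℝ) : -t ^ 2 / 2 = -(1 / 2) * t ^ (2 : ℝ) := by
    rw [rpow_two]; ring
  simp_rw [hsq]
  rw [integral_rpow_mul_exp_neg_mul_rpow two_pos (by linarith) one_half_pos, sub_add_cancel,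
    one_div, inv_rpow zero_le_two, neg_div, rpow_neg zero_le_two, inv_inv, rpow_sub two_pos,
    rpow_one]
  ring

theorem abs_mul_le_sq_div_add_mul_sq {b : ℝ} (hb : 0 < b) (c t : ℝ) :
    |c * t| ≤ c ^ 2 / (2 * b) + b / 2 * t ^ 2 := by
  rw [div_add' _ _ _ (by positivity), le_div_iff₀ (by positivity), abs_mul,
    ← sq_abs c, ← sq_abs t]
  nlinarith [sq_nonneg (|c| - b * |t|)]

theorem integrableOn_rpow_mul_exp_neg_mul_sq_mul_exp_abs {b s : ℝ} (hb : 0 < b) (hs : -1 < s)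
    (c : ℝ) : IntegrableOn (fun t => t ^ s * exp (-b * t ^ 2) * exp |c * t|) (Ioi 0) := by
  refine ((integrableOn_rpow_mul_exp_neg_mul_sq (half_pos hb) hs).const_mul
    (exp (c ^ 2 / (2 * b)))).mono' (by fun_prop)
    (ae_restrict_of_forall_mem measurableSet_Ioi ?_)
  intro t (ht : 0 < t)
  have hexp :
      exp (-b * t ^ 2) * exp |c * t| ≤ exp (c ^ 2 / (2 * b)) * exp (-(b / 2) * t ^ 2) := by
    rw [← exp_add, ← exp_add, exp_le_exp]
    linarith [abs_mul_le_sq_div_add_mul_sq hb c t]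
  rw [norm_of_nonneg (by positivity), mul_assoc]
  calc _ ≤ t ^ s * (exp (c ^ 2 / (2 * b)) * exp (-(b / 2) * t ^ 2)) := by gcongr
    _ = _ := by ring

theorem integral_Ioi_rpow_mul_exp_neg_sq_div_two_mul_pow_div_factorial {q : ℝ} (hq : 0 < q)
    (l : ℝ) (j : ℕ) :
    ∫ t in Ioi (0 : ℝ), t ^ (2 * q - 1) * exp (-t ^ 2 / 2) * ((-l * t) ^ j / j.factorial)
      = Gamma (q + j / 2) * 2 ^ (q + j / 2) * (-l) ^ j / j.factorial / 2 := by
  calc _ = ∫ t in Ioi (0 : ℝ),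
          (-l) ^ j / j.factorial * (t ^ (2 * q + j - 1) * exp (-t ^ 2 / 2)) := by
        refine setIntegral_congr_fun measurableSet_Ioi fun t (ht : 0 < t) => ?_
        rw [show 2 * q + j - 1 = 2 * q - 1 + j by ring, rpow_add ht, rpow_natCast, mul_pow]
        ring
    _ = (-l) ^ j / j.factorial * (2 ^ ((2 * q + j) / 2 - 1) * Gamma ((2 * q + j) / 2)) := by
        rw [integral_const_mul, integral_Ioi_rpow_mul_exp_neg_sq_div_two (by positivity)]
    _ = _ := by
        rw [show (2 * q + j) / 2 = q + j / 2 by ring, rpow_sub two_pos, rpow_one]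
        ring

theorem hermite_function_series_eq_integral_general (q l : ℝ) (hq : 0 < q) :
    (1 / (2 * Real.Gamma (2 * q))) *
        ∑' j : ℕ, Real.Gamma (q + j / 2) * (2 : ℝ) ^ (q + j / 2) * (-l) ^ j / (Nat.factorial j)
      = (1 / Real.Gamma (2 * q)) *
          ∫ t in Set.Ioi (0 : ℝ), t ^ (2 * q - 1) * Real.exp (-t ^ 2 / 2 - l * t) := by
  have hint :
      IntegrableOn (fun t => t ^ (2 * q - 1) * exp (-t ^ 2 / 2) * exp |-l * t|) (Ioi 0) := by
    convert integrableOn_rpow_mul_exp_neg_mul_sq_mul_exp_abs (s := 2 * q - 1) one_half_pos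
      (by linarith) (-l) using 5
    ring
  have hseries :
      HasSum (fun j : ℕ => Gamma (q + j / 2) * 2 ^ (q + j / 2) * (-l) ^ j / j.factorial / 2)
        (∫ t in Ioi (0 : ℝ), t ^ (2 * q - 1) * exp (-t ^ 2 / 2 - l * t)) := by
    convert hasSum_integral_mul_pow_div_factorial (by fun_prop) (by fun_prop) hint using 1
    · exact funext fun j =>
        (integral_Ioi_rpow_mul_exp_neg_sq_div_two_mul_pow_div_factorial hq l j).symm
    · refine setIntegral_congr_fun measurableSet_Ioi fun t _ => ?_
      rw [sub_eq_add_neg (-t ^ 2 / 2), exp_add, neg_mul, mul_assoc]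
  rw [← hseries.tsum_eq, tsum_div_const]
  ring

theorem hermite_function_series_eq_integral (q l : ℝ) (hq : 0 < q) (hl : 0 ≤ l) :
    (1 / (2 * Real.Gamma (2 * q))) *
        ∑' j : ℕ, Real.Gamma (q + j / 2) * (2 : ℝ) ^ (q + j / 2) * (-l) ^ j / (Nat.factorial j)
      = (1 / Real.Gamma (2 * q)) *
          ∫ t in Set.Ioi (0 : ℝ), t ^ (2 * q - 1) * Real.exp (-t ^ 2 / 2 - l * t) :=
  hermite_function_series_eq_integral_general q l hq
end

section
/- For q > 0 and λ ≥ 0, E[(B²/(λ²+B²))^q] = E(|B|^{2q}) · h_{-2q}(λ), where B is standard Gaussian, E(|B|^{2q}) = 2^q Γ(q+1/2)/Γ(1/2), and h_{-2q}(λ) = (1/Γ(2q)) ∫_0^∞ t^{2q-1} e^{-t²/2 - λt} dt. -/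
open Real MeasureTheory ProbabilityTheory Set

/-!
Since `x² / (l² + x²) = (1 + l² / x²)⁻¹`, the Gamma integral gives
`(x² / (l² + x²)) ^ q = Γ(q)⁻¹ ∫₀^∞ u^(q-1) e^(-u) e^(-u l² / x²) du`, so by Fubini the moment is a
Gamma-weighted average of the Laplace transform `E[e^(-c / B²)] = e^(-√(2c))`. With `b = √(2c)`
this is Glasser's integral `∫₀^∞ e^(-x²/2 - b²/(2x²)) dx = √(π/2) e^(-b)`: the substitution `x ↦ b / x`
turns the integral into `∫₀^∞ (b / x²) e^(-x²/2 - b²/(2x²)) dx`, and the substitution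
`y = x - b / x`, a bijection of `(0, ∞)` onto `ℝ`, turns the sum of the two into `e^b` times a full
Gaussian integral. Finally `u = t² / 2` produces `2^(1-q) Γ(2q) h_{-2q}(l)`, and Legendre's
duplication formula matches the constants.
-/

section ChangeOfVariables

variable {E : Type*} [NormedAddCommGroup E] [NormedSpace ℝ E] {b : ℝ}

lemma image_const_div_Ioi_zero (hb : 0 < b) : (b / ·) '' Ioi (0 : ℝ) = Ioi 0 := by
  refine Subset.antisymm (image_subset_iff.2 fun x hx ↦ div_pos hb hx) fun y hy ↦ ?_
  exact ⟨b / y, div_pos hb hy, div_div_cancel₀ hb.ne'⟩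

lemma injOn_const_div_Ioi_zero (hb : 0 < b) : InjOn (b / ·) (Ioi (0 : ℝ)) :=
  fun x (hx : 0 < x) y (hy : 0 < y) h ↦ by
    rw [div_eq_div_iff hx.ne' hy.ne'] at h
    exact mul_left_cancel₀ hb.ne' h.symm

lemma hasDerivAt_const_div {x : ℝ} (hx : x ≠ 0) :
    HasDerivAt (b / ·) (-(b / x ^ 2)) x := by
  simpa [div_eq_mul_inv, neg_div] using (hasDerivAt_inv hx).const_mul b

lemma integral_Ioi_comp_const_div (hb : 0 < b) (f : ℝ → E) :
    ∫ x in Ioi 0, (b / x ^ 2) • f (b / x) = ∫ x in Ioi 0, f x := by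
  conv_rhs => rw [← image_const_div_Ioi_zero hb]
  rw [integral_image_eq_integral_abs_deriv_smul measurableSet_Ioi
    (fun x (hx : 0 < x) ↦ (hasDerivAt_const_div hx.ne').hasDerivWithinAt)
    (injOn_const_div_Ioi_zero hb)]
  refine setIntegral_congr_fun measurableSet_Ioi fun x (hx : 0 < x) ↦ ?_
  rw [abs_neg, abs_of_pos (by positivity)]

lemma integrableOn_Ioi_comp_const_div_iff (hb : 0 < b) (f : ℝ → E) :
    IntegrableOn (fun x ↦ (b / x ^ 2) • f (b / x)) (Ioi 0) ↔ IntegrableOn f (Ioi 0) := by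
  conv_rhs => rw [← image_const_div_Ioi_zero hb]
  rw [integrableOn_image_iff_integrableOn_abs_deriv_smul measurableSet_Ioi
    (fun x (hx : 0 < x) ↦ (hasDerivAt_const_div hx.ne').hasDerivWithinAt)
    (injOn_const_div_Ioi_zero hb)]
  refine integrableOn_congr_fun (fun x (hx : 0 < x) ↦ ?_) measurableSet_Ioi
  rw [abs_neg, abs_of_pos (by positivity)]

lemma image_sub_const_div_Ioi_zero (hb : 0 < b) : (fun x : ℝ ↦ x - b / x) '' Ioi 0 = univ := by
  refine eq_univ_of_forall fun y ↦ ?_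
  -- the positive root of `x ^ 2 - y x - b`
  set s := √(y ^ 2 + 4 * b)
  have hs : s ^ 2 = y ^ 2 + 4 * b := sq_sqrt (by positivity)
  have hys : |y| < s := by
    rw [← sqrt_sq_eq_abs]; exact sqrt_lt_sqrt (sq_nonneg y) (by linarith)
  have hpos : 0 < y + s := by linarith [neg_abs_le y]
  refine ⟨(y + s) / 2, show 0 < (y + s) / 2 by positivity, ?_⟩
  field_simp
  nlinarith

lemma injOn_sub_const_div_Ioi_zero (hb : 0 < b) : InjOn (fun x : ℝ ↦ x - b / x) (Ioi 0) := by
  intro x (hx : 0 < x) y (hy : 0 < y) h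
  have : (x - y) * (x * y + b) = 0 := by
    field_simp at h; linear_combination h
  exact sub_eq_zero.1 ((mul_eq_zero.1 this).resolve_right (by positivity))

lemma integral_Ioi_comp_sub_const_div (hb : 0 < b) (f : ℝ → E) :
    ∫ x in Ioi 0, (1 + b / x ^ 2) • f (x - b / x) = ∫ y, f y := by
  conv_rhs => rw [← setIntegral_univ, ← image_sub_const_div_Ioi_zero hb]
  rw [integral_image_eq_integral_abs_deriv_smul measurableSet_Ioi
      (fun x (hx : 0 < x) ↦ by
        have h := (hasDerivAt_id' x).sub (hasDerivAt_const_div (b := b) hx.ne')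
        rw [sub_neg_eq_add] at h
        exact h.hasDerivWithinAt)
      (injOn_sub_const_div_Ioi_zero hb)]
  refine setIntegral_congr_fun measurableSet_Ioi fun x (hx : 0 < x) ↦ ?_
  rw [abs_of_pos (by positivity)]

lemma integral_Ioi_comp_sq_div_two (f : ℝ → E) :
    ∫ t in Ioi 0, t • f (t ^ 2 / 2) = ∫ u in Ioi 0, f u := by
  have himage : (fun t : ℝ ↦ t ^ 2 / 2) '' Ioi 0 = Ioi 0 := by
    refine Subset.antisymm
      (image_subset_iff.2 fun t (ht : 0 < t) ↦ show 0 < t ^ 2 / 2 by positivity)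
      fun u (hu : 0 < u) ↦ ⟨√(2 * u), show 0 < √(2 * u) by positivity, ?_⟩
    simp only [sq_sqrt (by positivity : 0 ≤ 2 * u)]
    ring
  conv_rhs => rw [← himage]
  rw [integral_image_eq_integral_abs_deriv_smul measurableSet_Ioi
    (fun t _ ↦ by simpa using ((hasDerivAt_pow 2 t).div_const 2).hasDerivWithinAt)
    (fun s (hs : 0 < s) t (ht : 0 < t) h ↦ by nlinarith [h])]
  exact setIntegral_congr_fun measurableSet_Ioi fun t (ht : 0 < t) ↦ by rw [abs_of_pos ht]

end ChangeOfVariables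

section Glasser

variable {b : ℝ}

lemma exp_neg_sq_div_two_sub_sq_div_sq_comp_const_div (hb : 0 < b) {x : ℝ} (hx : x ≠ 0) :
    exp (-(b / x) ^ 2 / 2 - b ^ 2 / (2 * (b / x) ^ 2))
      = exp (-x ^ 2 / 2 - b ^ 2 / (2 * x ^ 2)) := by
  congr 1
  field_simp
  ring

lemma exp_neg_sub_const_div_sq_div_two {x : ℝ} (hx : x ≠ 0) :
    exp (-(x - b / x) ^ 2 / 2) = exp b * exp (-x ^ 2 / 2 - b ^ 2 / (2 * x ^ 2)) := by
  rw [← exp_add]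
  congr 1
  field_simp
  ring

lemma integrable_exp_neg_sq_div_two_sub_sq_div_sq (b : ℝ) :
    Integrable fun x : ℝ ↦ exp (-x ^ 2 / 2 - b ^ 2 / (2 * x ^ 2)) := by
  refine (integrable_exp_neg_mul_sq (by norm_num : (0 : ℝ) < 1 / 2)).mono' (by fun_prop)
    (ae_of_all _ fun x ↦ ?_)
  rw [norm_of_nonneg (exp_nonneg _), exp_le_exp]
  have : 0 ≤ b ^ 2 / (2 * x ^ 2) := by positivity
  linarith

theorem integral_Ioi_exp_neg_sq_div_two_sub_sq_div_sq (hb : 0 < b) :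
    ∫ x in Ioi 0, exp (-x ^ 2 / 2 - b ^ 2 / (2 * x ^ 2)) = √(2 * π) / 2 * exp (-b) := by
  set g : ℝ → ℝ := fun x ↦ exp (-x ^ 2 / 2 - b ^ 2 / (2 * x ^ 2))
  have hg : IntegrableOn g (Ioi 0) := (integrable_exp_neg_sq_div_two_sub_sq_div_sq b).integrableOn
  have hinv : EqOn (fun x ↦ (b / x ^ 2) • g (b / x)) (fun x ↦ b / x ^ 2 * g x) (Ioi 0) :=
    fun x (hx : 0 < x) ↦ by
      simp only [g, smul_eq_mul, exp_neg_sq_div_two_sub_sq_div_sq_comp_const_div hb hx.ne']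
  have hI : ∫ x in Ioi 0, b / x ^ 2 * g x = ∫ x in Ioi 0, g x := by
    rw [← setIntegral_congr_fun measurableSet_Ioi hinv, integral_Ioi_comp_const_div hb]
  have hI' : IntegrableOn (fun x ↦ b / x ^ 2 * g x) (Ioi 0) :=
    (integrableOn_congr_fun hinv measurableSet_Ioi).1
      ((integrableOn_Ioi_comp_const_div_iff hb g).2 hg)
  have key : √(2 * π) = exp b * (2 * ∫ x in Ioi 0, g x) :=
    calc √(2 * π) = ∫ y, exp (-(1 / 2) * y ^ 2) := by rw [integral_gaussian]; ring_nf
      _ = ∫ y, exp (-y ^ 2 / 2) := by congr with y; ring_nf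
      _ = ∫ x in Ioi 0, (1 + b / x ^ 2) • exp (-(x - b / x) ^ 2 / 2) :=
          (integral_Ioi_comp_sub_const_div hb _).symm
      _ = ∫ x in Ioi 0, exp b * (g x + b / x ^ 2 * g x) :=
          setIntegral_congr_fun measurableSet_Ioi fun x (hx : 0 < x) ↦ by
            simp only [smul_eq_mul, g, exp_neg_sub_const_div_sq_div_two hx.ne']
            ring
      _ = exp b * (2 * ∫ x in Ioi 0, g x) := by
          rw [integral_const_mul, integral_add hg hI', hI, two_mul]
  rw [exp_neg]
  field_simp
  linarith

end Glasser

theorem integral_exp_neg_div_sq_gaussianReal {c : ℝ} (hc : 0 ≤ c) :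
    ∫ x, exp (-c / x ^ 2) ∂gaussianReal 0 1 = exp (-√(2 * c)) := by
  rcases hc.eq_or_lt with rfl | hc
  · simp
  set b := √(2 * c)
  have hb : 0 < b := by positivity
  have hcb : c = b ^ 2 / 2 := by rw [sq_sqrt (by positivity)]; ring
  have hpdf (x : ℝ) : gaussianPDFReal 0 1 x • exp (-c / x ^ 2)
      = (√(2 * π))⁻¹ * exp (-|x| ^ 2 / 2 - b ^ 2 / (2 * |x| ^ 2)) := by
    simp only [gaussianPDFReal, NNReal.coe_one, mul_one, sub_zero, smul_eq_mul]
    rw [mul_assoc, ← exp_add, sq_abs, hcb]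
    ring_nf
  rw [integral_gaussianReal_eq_integral_smul one_ne_zero]
  simp_rw [hpdf]
  rw [integral_const_mul,
    integral_comp_abs (f := fun x ↦ exp (-x ^ 2 / 2 - b ^ 2 / (2 * x ^ 2))),
    integral_Ioi_exp_neg_sq_div_two_sub_sq_div_sq hb]
  field_simp

lemma rpow_sq_div_add_sq_eq_integral_Ioi {q : ℝ} (hq : 0 < q) (l : ℝ) {x : ℝ} (hx : x ≠ 0) :
    (x ^ 2 / (l ^ 2 + x ^ 2)) ^ q
      = (Gamma q)⁻¹ * ∫ u in Ioi 0, u ^ (q - 1) * exp (-u) * exp (-(u * l ^ 2) / x ^ 2) := by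
  have hr : 0 < 1 + l ^ 2 / x ^ 2 := by positivity
  have hinv : 1 / (1 + l ^ 2 / x ^ 2) = x ^ 2 / (l ^ 2 + x ^ 2) := by field_simp; ring
  have hexp (u : ℝ) :
      exp (-u) * exp (-(u * l ^ 2) / x ^ 2) = exp (-((1 + l ^ 2 / x ^ 2) * u)) := by
    rw [← exp_add]; congr 1; ring
  simp_rw [mul_assoc, hexp, integral_rpow_mul_exp_neg_mul_Ioi hq hr, hinv]
  field_simp [(Gamma_pos_of_pos hq).ne']

theorem integral_rpow_sq_div_add_sq_eq_integral_Ioi {μ : Measure ℝ} [IsFiniteMeasure μ]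
    (hμ : μ {0} = 0) {q : ℝ} (hq : 0 < q) (l : ℝ) :
    ∫ x, (x ^ 2 / (l ^ 2 + x ^ 2)) ^ q ∂μ
      = (Gamma q)⁻¹ *
          ∫ u in Ioi 0, u ^ (q - 1) * exp (-u) * ∫ x, exp (-(u * l ^ 2) / x ^ 2) ∂μ := by
  set F : ℝ → ℝ → ℝ := fun x u ↦ u ^ (q - 1) * exp (-u) * exp (-(u * l ^ 2) / x ^ 2)
  have hF : Integrable (Function.uncurry F) (μ.prod (volume.restrict (Ioi 0))) := by
    refine ((integrable_const (1 : ℝ)).mul_prod (GammaIntegral_convergent hq)).mono'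
      (by fun_prop) ?_
    filter_upwards [Measure.quasiMeasurePreserving_snd.ae (ae_restrict_mem measurableSet_Ioi)]
      with ⟨x, u⟩ (hu : 0 < u)
    have : exp (-(u * l ^ 2) / x ^ 2) ≤ 1 := by
      rw [exp_le_one_iff, neg_div, neg_nonpos]; positivity
    simp only [Function.uncurry_apply_pair, F, one_mul, norm_mul, norm_of_nonneg (exp_nonneg _),
      norm_of_nonneg (rpow_nonneg hu.le _)]
    rw [mul_comm (exp (-u))]
    exact mul_le_of_le_one_right (by positivity) this
  have hx0 : ∀ᵐ x ∂μ, x ≠ 0 := measure_eq_zero_iff_ae_notMem.1 hμ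
  calc ∫ x, (x ^ 2 / (l ^ 2 + x ^ 2)) ^ q ∂μ
        = ∫ x, (Gamma q)⁻¹ * (∫ u in Ioi 0, F x u) ∂μ :=
        integral_congr_ae <| hx0.mono fun x hx ↦ by
          simp only [F, rpow_sq_div_add_sq_eq_integral_Ioi hq l hx]
    _ = (Gamma q)⁻¹ * ∫ u in Ioi 0, ∫ x, F x u ∂μ := by
        rw [integral_const_mul]; exact congrArg _ (integral_integral_swap hF)
    _ = _ := by simp only [F, integral_const_mul]

lemma integral_Ioi_rpow_mul_exp_neg_mul_exp_neg_sqrt {l : ℝ} (hl : 0 ≤ l) (q : ℝ) :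
    ∫ u in Ioi 0, u ^ (q - 1) * exp (-u) * exp (-√(2 * (u * l ^ 2)))
      = 2 ^ (1 - q) * ∫ t in Ioi 0, t ^ (2 * q - 1) * exp (-t ^ 2 / 2 - l * t) := by
  rw [← integral_Ioi_comp_sq_div_two, ← integral_const_mul]
  refine setIntegral_congr_fun measurableSet_Ioi fun t (ht : 0 < t) ↦ ?_
  have hsqrt : √(2 * (t ^ 2 / 2 * l ^ 2)) = l * t := by
    rw [show 2 * (t ^ 2 / 2 * l ^ 2) = (l * t) ^ 2 by ring, sqrt_sq (by positivity)]
  have hrpow : t * (t ^ 2 / 2) ^ (q - 1) = 2 ^ (1 - q) * t ^ (2 * q - 1) := by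
    have ht' : t ^ (2 * q - 1) = t * t ^ ((2 : ℕ) * (q - 1)) := by
      rw [show 2 * q - 1 = 1 + (2 : ℕ) * (q - 1) by push_cast; ring, rpow_add ht, rpow_one]
    rw [div_rpow (by positivity) zero_le_two, ← rpow_natCast, ← rpow_mul ht.le, ht',
      show (1 : ℝ) - q = -(q - 1) by ring, rpow_neg zero_le_two]
    ring
  rw [smul_eq_mul, hsqrt, ← mul_assoc, ← mul_assoc, hrpow, mul_assoc, mul_assoc, ← exp_add]
  ring_nf

lemma Gamma_inv_mul_two_rpow_one_sub {q : ℝ} (hq : 0 < q) :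
    (Gamma q)⁻¹ * 2 ^ (1 - q)
      = 2 ^ q * Gamma (q + 1 / 2) / Gamma (1 / 2) * (1 / Gamma (2 * q)) := by
  have hpow : (2 : ℝ) ^ q * 2 ^ (1 - 2 * q) = 2 ^ (1 - q) := by
    rw [← rpow_add two_pos]; ring_nf
  have hq0 : Gamma q ≠ 0 := (Gamma_pos_of_pos hq).ne'
  have : Gamma (2 * q) ≠ 0 := (Gamma_pos_of_pos (by positivity)).ne'
  have hdup : Gamma (q + 1 / 2) = Gamma (2 * q) * 2 ^ (1 - 2 * q) * √π / Gamma q := by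
    rw [eq_div_iff hq0, mul_comm, Gamma_mul_Gamma_add_half]
  rw [hdup, Gamma_one_half_eq, ← hpow]
  field_simp

theorem gaussian_moment_eq_hermite (q l : ℝ) (hq : 0 < q) (hl : 0 ≤ l) :
    (∫ x : ℝ, (x ^ 2 / (l ^ 2 + x ^ 2)) ^ q ∂(gaussianReal 0 1))
      = (2 ^ q * Real.Gamma (q + 1 / 2) / Real.Gamma (1 / 2)) *
          ((1 / Real.Gamma (2 * q)) *
            ∫ t in Set.Ioi (0 : ℝ), t ^ (2 * q - 1) * Real.exp (-t ^ 2 / 2 - l * t)) := by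
  have hγ : gaussianReal 0 1 {0} = 0 :=
    gaussianReal_absolutelyContinuous 0 one_ne_zero volume_singleton
  have hlaplace : EqOn
      (fun u ↦ u ^ (q - 1) * exp (-u) * ∫ x, exp (-(u * l ^ 2) / x ^ 2) ∂gaussianReal 0 1)
      (fun u ↦ u ^ (q - 1) * exp (-u) * exp (-√(2 * (u * l ^ 2)))) (Ioi 0) :=
    fun u (hu : 0 < u) ↦ by
      simp only [integral_exp_neg_div_sq_gaussianReal (by positivity : 0 ≤ u * l ^ 2)]
  rw [integral_rpow_sq_div_add_sq_eq_integral_Ioi hγ hq l,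
    setIntegral_congr_fun measurableSet_Ioi hlaplace,
    integral_Ioi_rpow_mul_exp_neg_mul_exp_neg_sqrt hl, ← mul_assoc,
    Gamma_inv_mul_two_rpow_one_sub hq, mul_assoc]
end

section
/- The two-parameter EPPF p_{α,θ}(n_1,...,n_k) = ([θ+α]_{k-1;α} / [θ+1]_{n-1}) ∏_{i=1}^k [1-α]_{n_i-1}, where [x]_{m;a} = ∏_{j=0}^{m-1}(x + j a), [x]_m = [x]_{m;1}, and n = ∑ n_i, satisfies the addition rule p_{α,θ}(n_1,...,n_k) = ∑_{j=1}^k p_{α,θ}(...,n_j+1,...) + p_{α,θ}(n_1,...,n_k,1) for all 0 ≤ α < 1 and θ > -α. -/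
open Finset

/-- Generalized rising factorial `[x]_{m;a} = x(x+a)⋯(x+(m-1)a)`. -/
noncomputable def risingFacA (x a : ℝ) (m : ℕ) : ℝ := ∏ j ∈ Finset.range m, (x + j * a)

/-- The two-parameter (Pitman–Yor) EPPF
`p_{α,θ}(n_1,…,n_k) = [θ+α]_{k-1;α} ∏ [1-α]_{n_i-1} / [θ+1]_{n-1}` with `n = ∑ n_i`. -/
noncomputable def pdEPPF (α θ : ℝ) {k : ℕ} (n : Fin k → ℕ) : ℝ :=
  risingFacA (θ + α) α (k - 1) / risingFacA (θ + 1) 1 ((∑ i, n i) - 1) *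
    ∏ i, risingFacA (1 - α) 1 (n i - 1)

lemma risingFacA_succ (x a : ℝ) (m : ℕ) :
    risingFacA x a (m + 1) = risingFacA x a m * (x + m * a) := by
  simp [risingFacA, Finset.prod_range_succ]

lemma risingFacA_zero (x a : ℝ) : risingFacA x a 0 = 1 := by simp [risingFacA]

lemma risingFacA_pos {x a : ℝ} (hx : 0 < x) (ha : 0 ≤ a) (m : ℕ) :
    0 < risingFacA x a m := by
  apply Finset.prod_pos
  intro j _
  positivity

theorem pdEPPF_addition_rule (α θ : ℝ) (hα : 0 ≤ α) (hα1 : α < 1) (hθ : θ > -α)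
    (k : ℕ) (hk : 1 ≤ k) (n : Fin k → ℕ) (hn : ∀ i, 1 ≤ n i) :
    pdEPPF α θ n
      = (∑ j, pdEPPF α θ (Function.update n j (n j + 1)))
        + pdEPPF α θ (Fin.snoc n 1) := by
  classical
  set N := ∑ i, n i with hNdef
  have hkN : k ≤ N := by
    calc k = ∑ _i : Fin k, 1 := by simp
    _ ≤ N := Finset.sum_le_sum fun i _ => hn i
  have hN : 1 ≤ N := le_trans hk hkN
  obtain ⟨m, hm⟩ : ∃ m, N = m + 1 := ⟨N - 1, by omega⟩
  have hθ1 : (0 : ℝ) < θ + 1 := by linarith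
  set A := risingFacA (θ + α) α (k - 1) with hA
  set B := risingFacA (θ + 1) 1 m with hB
  set P := ∏ i, risingFacA (1 - α) 1 (n i - 1) with hP
  have hBpos : 0 < B := risingFacA_pos hθ1 zero_le_one m
  have hBM : (0 : ℝ) < θ + 1 + m := by positivity
  have hB' : risingFacA (θ + 1) 1 (m + 1) = B * (θ + 1 + m) := by
    rw [risingFacA_succ, hB]; ring
  have hLHS : pdEPPF α θ n = A / B * P := by
    rw [pdEPPF, ← hNdef, hm]
    simp [hA, hB, hP]
  -- sum after update
  have hsum : ∀ j : Fin k, ∑ i, Function.update n j (n j + 1) i = N + 1 := by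
    intro j
    rw [Finset.sum_update_of_mem (Finset.mem_univ j)]
    have h2 := Finset.add_sum_erase Finset.univ n (Finset.mem_univ j)
    rw [Finset.sdiff_singleton_eq_erase]
    omega
  -- the updated terms
  have hterm : ∀ j : Fin k, pdEPPF α θ (Function.update n j (n j + 1))
      = A / (B * (θ + 1 + m)) * (((n j : ℝ) - α) * P) := by
    intro j
    rw [pdEPPF, hsum j]
    have h1 : N + 1 - 1 = m + 1 := by omega
    rw [h1, hB']
    have hprod : (∏ i, risingFacA (1 - α) 1 (Function.update n j (n j + 1) i - 1))
        = ((n j : ℝ) - α) * P := by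
      have hc : (fun i => risingFacA (1 - α) 1 (Function.update n j (n j + 1) i - 1))
          = Function.update (fun i => risingFacA (1 - α) 1 (n i - 1)) j
              (risingFacA (1 - α) 1 (n j + 1 - 1)) := by
        funext i
        by_cases h : i = j
        · subst h; simp
        · simp [Function.update_of_ne h]
      rw [hc, Finset.prod_update_of_mem (Finset.mem_univ j)]
      have hnj : n j + 1 - 1 = (n j - 1) + 1 := by have := hn j; omega
      rw [hnj, risingFacA_succ, hP,
        ← Finset.mul_prod_erase Finset.univ _ (Finset.mem_univ j),
        Finset.sdiff_singleton_eq_erase]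
      have hcast : ((n j - 1 : ℕ) : ℝ) = (n j : ℝ) - 1 := by
        have := hn j
        push_cast [this]
        ring
      rw [hcast]
      ring
    rw [hprod, hA]
  -- the snoc term
  have hsnoc : pdEPPF α θ (Fin.snoc n 1)
      = A * (θ + k * α) / (B * (θ + 1 + m)) * P := by
    rw [pdEPPF]
    have hsum2 : ∑ i : Fin (k + 1), (Fin.snoc n 1 : Fin (k+1) → ℕ) i = N + 1 := by
      rw [Fin.sum_univ_castSucc]
      simp [hNdef]
    rw [hsum2]
    have h1 : N + 1 - 1 = m + 1 := by omega
    rw [h1, hB']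
    have hA2 : risingFacA (θ + α) α (k + 1 - 1) = A * (θ + k * α) := by
      obtain ⟨l, hl⟩ : ∃ l, k = l + 1 := ⟨k - 1, by omega⟩
      have : k + 1 - 1 = l + 1 := by omega
      rw [this, risingFacA_succ, hA, hl]
      have : (l + 1 : ℕ) - 1 = l := by omega
      rw [this]
      push_cast
      ring
    rw [hA2]
    congr 1
    rw [Fin.prod_univ_castSucc]
    simp [hP, risingFacA_zero]
  rw [hLHS, Finset.sum_congr rfl (fun j _ => hterm j), hsnoc]
  have hsum3 : ∑ j : Fin k, A / (B * (θ + 1 + m)) * (((n j : ℝ) - α) * P)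
      = A / (B * (θ + 1 + m)) * ((((N : ℝ) - k * α)) * P) := by
    rw [← Finset.mul_sum, ← Finset.sum_mul, Finset.sum_sub_distrib,
      Finset.sum_const, hNdef]
    push_cast
    simp only [Finset.card_univ, Fintype.card_fin, nsmul_eq_mul]
    try ring
  rw [hsum3]
  have hNm : (N : ℝ) = m + 1 := by exact_mod_cast congrArg Nat.cast hm
  rw [hNm]
  field_simp
  ring
end
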